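/- arXiv:1606.08872 — 2 statements merged into one kernel-verified Lean document; each statement's English description precedes it below -/
import Mathlib

section
/- For every tuple (k_{x_1}, …, k_r) ∈ D_{(r_1⋯r_a)}, the element w = Π_2 Π_3 ⋯ Π_a has minimal Coxeter length in its left coset W(P)w; that is, ℓ(uw) ≥ ℓ(w) for every u ∈ W(P). -/
open Equiv Finset

/-- The simple reflection `s i = (i, i+1)` (1-based) in `S_{r+1}`, for `1 ≤ i ≤ r`;
the junk value `1` otherwise. -/
def sr (r i : ℕ) : Equiv.Perm (Fin (r + 1)) :=
  if h : 1 ≤ i ∧ i ≤ r then Equiv.swap ⟨i - 1, by omega⟩ ⟨i, by omega⟩ else 1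

/-- The cycle `π_k` with ambient index `i`, i.e. `s_i s_{i-1} ⋯ s_k`
(the identity when `k = i + 1`). -/
def cyc (r i k : ℕ) : Equiv.Perm (Fin (r + 1)) :=
  ((List.range (i + 1 - k)).map fun t => sr r (i - t)).prod

/-- The product `π_{k i} π_{k (i+1)} ⋯ π_{k j}`, the factor `π_{k t}` being the
cycle with ambient index `t`. -/
def cycProd (r : ℕ) (k : ℕ → ℕ) (i j : ℕ) : Equiv.Perm (Fin (r + 1)) :=
  ((List.range' i (j + 1 - i)).map fun t => cyc r t (k t)).prod

/-- Coxeter length of a permutation: the number of inversions. -/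
def lenInv {n : ℕ} (w : Equiv.Perm (Fin n)) : ℕ :=
  (Finset.univ.filter fun p : Fin n × Fin n => p.1 < p.2 ∧ w p.2 < w p.1).card

/-- Partial sums of a (1-based) composition: `psum c j = c 1 + ⋯ + c j`. -/
def psum (c : ℕ → ℕ) (j : ℕ) : ℕ := ∑ i ∈ Finset.Icc 1 j, c i

/-- The transpose partition of `(t 1, …, t b)`: `transp b t j = #{i ∈ [1,b] : t i ≥ j}`. -/
def transp (b : ℕ) (t : ℕ → ℕ) (j : ℕ) : ℕ :=
  ((Finset.Icc 1 b).filter fun i => j ≤ t i).card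

/-- The element of `Fin (r+1)` with value `i` (for `i ≤ r`). -/
def finOf (r i : ℕ) : Fin (r + 1) := ⟨min i r, by omega⟩

/-- `w(α_i)` is a positive root, where `α_i = e_i − e_{i+1}` (1-based), i.e. the
0-based pair `(i-1, i)`; `w(e_c − e_d) = e_{w c} − e_{w d}` is positive iff `w c < w d`. -/
def posRoot (r : ℕ) (w : Equiv.Perm (Fin (r + 1))) (i : ℕ) : Prop :=
  (w (finOf r (i - 1)) : ℕ) < w (finOf r i)

/-- `w(α_i)` is a negative root. -/
def negRoot (r : ℕ) (w : Equiv.Perm (Fin (r + 1))) (i : ℕ) : Prop :=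
  (w (finOf r i) : ℕ) < w (finOf r (i - 1))

/-- `w(α_i)` is a simple root. -/
def simpleRoot (r : ℕ) (w : Equiv.Perm (Fin (r + 1))) (i : ℕ) : Prop :=
  (w (finOf r i) : ℕ) = (w (finOf r (i - 1)) : ℕ) + 1

/-- `w(α_i) = α_j` (as roots: the image pair is `(j-1, j)` in 0-based indices). -/
def eqRoot (r : ℕ) (w : Equiv.Perm (Fin (r + 1))) (i j : ℕ) : Prop :=
  (w (finOf r (i - 1)) : ℕ) = j - 1 ∧ (w (finOf r i) : ℕ) = j

/-- `Π_l Π_{l+1} ⋯ Π_a` for the composition `c` and tuple `k`, where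
`Π_j = π_{k_{x_{j-1}}} ⋯ π_{k_{x_j - 1}}` and `x_j = psum c j`. -/
def tailProd (r a : ℕ) (c k : ℕ → ℕ) (l : ℕ) : Equiv.Perm (Fin (r + 1)) :=
  ((List.range' l (a + 1 - l)).map fun j => cycProd r k (psum c (j - 1)) (psum c j - 1)).prod

/-- The subgroup `W(P)`: generated by the simple reflections `s i` with `i ∈ [1,r]`
avoiding the partial sums `x 1, …, x (a-1)` of the composition `c`. -/
def WP (r a : ℕ) (c : ℕ → ℕ) : Subgroup (Equiv.Perm (Fin (r + 1))) :=
  Subgroup.closure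
    {g | ∃ i, 1 ≤ i ∧ i ≤ r ∧ (∀ j, 1 ≤ j → j ≤ a - 1 → i ≠ psum c j) ∧ g = sr r i}

/-- `α_i ∈ Δ_λ` for the composition `λ = (p 1, …, p m)` of `r+1`. -/
def inDelta (r m : ℕ) (p : ℕ → ℕ) (i : ℕ) : Prop :=
  1 ≤ i ∧ i ≤ r ∧ ∀ j, 1 ≤ j → j ≤ m - 1 → i ≠ psum p j

/-- The left coset `H · g`. -/
def cosetOf {G : Type*} [Group G] (H : Subgroup G) (g : G) : Set G :=
  {x | ∃ h ∈ H, x = h * g}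

/-- The (0-based) positions `u` and `v` lie in the same block of the composition
`μ^⊤ = transp b t`; a negative root `e_c − e_d` lies in `Φ⁻_{μ^⊤}` iff its two
indices lie in the same block. -/
def sameBlock (b : ℕ) (t : ℕ → ℕ) (u v : ℕ) : Prop :=
  ∃ j, 1 ≤ j ∧ j ≤ t 1 ∧
    psum (transp b t) (j - 1) ≤ u ∧ u < psum (transp b t) j ∧
    psum (transp b t) (j - 1) ≤ v ∧ v < psum (transp b t) j

/-!
Call the values `x_{j-1}, …, x_j - 1` (0-based) the `j`-th block. Every `u ∈ W(P)` maps each value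
into its own block, so it preserves the block index, a monotone function of the value. The heart
of the matter is that `w⁻¹` is increasing on each block. Then an inversion `p < q`, `w q < w p` of
`w` has `w q` and `w p` in different blocks, `w q` in the lower one; `u` keeps both in their
blocks, so `(p, q)` is still an inversion of `u w`.

That `w⁻¹` is increasing on blocks follows by induction on the number of factors `Π_j`, from the
shape of `Π_j⁻¹`: since `π_k⁻¹` is the cycle `(k-1 k … i)`, `Π_j⁻¹` fixes the values above block
`j`, sends the value `i` of block `j` to `k_i - 1` (increasing in `i`), and is increasing below
block `j`.
-/

lemma Fin.swap_eq_cycleIcc {n : ℕ} [NeZero n] {x y : Fin n} (h : (y : ℕ) = x + 1) :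
    swap x y = Fin.cycleIcc x y := by
  have hxy : x < y := by rw [Fin.lt_def]; omega
  ext z
  rcases lt_trichotomy z x with hz | rfl | hz
  · rw [swap_apply_of_ne_of_ne hz.ne (hz.trans hxy).ne, Fin.cycleIcc_of_lt hz]
  · rw [swap_apply_left, Fin.cycleIcc_of_ge_of_lt le_rfl hxy, Fin.val_add_one_of_lt' (by omega), h]
  rcases lt_or_eq_of_le (show y ≤ z by rw [Fin.le_def]; rw [Fin.lt_def] at hz; omega) with hz' | rfl
  · rw [swap_apply_of_ne_of_ne hz.ne' hz'.ne', Fin.cycleIcc_of_gt hz']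
  · rw [swap_apply_right, Fin.cycleIcc_of_last hxy.le]

lemma Equiv.Perm.mapsTo_of_forall_notMem_apply_eq {α : Type*} {σ : Perm α} {s : Set α}
    (h : ∀ x ∉ s, σ x = x) : Set.MapsTo σ s s := by
  intro x hx
  by_contra hσx
  rw [σ.injective (h _ hσx)] at hσx
  exact hσx hx

theorem lenInv_le_lenInv_mul {n : ℕ} {α : Type*} [LinearOrder α] {β : Fin n → α}
    (hβ : Monotone β) {u w : Perm (Fin n)} (hu : ∀ x, β (u x) = β x)
    (hw : ∀ x y, β x = β y → x < y → w⁻¹ x < w⁻¹ y) :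
    lenInv w ≤ lenInv (u * w) := by
  refine card_le_card (monotone_filter_right _ fun xy _ ⟨hlt, hinv⟩ => ⟨hlt, ?_⟩)
  have hβlt : β (w xy.2) < β (w xy.1) := by
    refine (hβ hinv.le).lt_of_ne fun heq => ?_
    have := hw _ _ heq hinv
    simp only [Perm.inv_def, symm_apply_apply] at this
    exact lt_asymm hlt this
  simp only [Perm.mul_apply]
  refine lt_of_not_ge fun hle => ?_
  have := hβ hle
  rw [hu, hu] at this
  exact this.not_gt hβlt

lemma sr_eq_swap {r i : ℕ} (h1 : 1 ≤ i) (h2 : i ≤ r) :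
    sr r i = swap ⟨i - 1, by omega⟩ ⟨i, by omega⟩ :=
  dif_pos ⟨h1, h2⟩

lemma cyc_eq_cyc_mul_sr {r i k : ℕ} (h : k ≤ i) : cyc r i k = cyc r i (k + 1) * sr r k := by
  rw [cyc, cyc, show i + 1 - k = (i - k) + 1 by omega, show i + 1 - (k + 1) = i - k by omega,
    List.range_succ, List.map_append, List.prod_append, List.map_singleton, List.prod_singleton,
    show i - (i - k) = k by omega]

lemma cyc_inv_eq_cycleIcc {r i k : ℕ} (hi : i ≤ r) (hk1 : 1 ≤ k) (hk : k ≤ i + 1) :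
    (cyc r i k)⁻¹ = Fin.cycleIcc ⟨k - 1, by omega⟩ ⟨i, by omega⟩ := by
  induction hk using Nat.decreasingInduction with
  | self =>
    simp only [cyc, Nat.sub_self, List.range_zero, List.map_nil, List.prod_nil, inv_one,
      Nat.add_sub_cancel]
    exact Fin.cycleIcc_eq.symm
  | of_succ k hk ih =>
    rw [cyc_eq_cyc_mul_sr (by omega), mul_inv_rev, ih (by omega), sr_eq_swap hk1 (by omega),
      swap_inv, Fin.swap_eq_cycleIcc (by simp; omega)]
    simp only [Nat.add_sub_cancel]
    exact DFunLike.coe_injective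
      (Fin.cycleIcc.trans (by simp [Fin.le_def]) (by simp [Fin.le_def]; omega))

lemma cyc_inv_apply_val {r i k : ℕ} (hi : i ≤ r) (hk1 : 1 ≤ k) (hk : k ≤ i + 1)
    (y : Fin (r + 1)) :
    (((cyc r i k)⁻¹ y : Fin (r + 1)) : ℕ) =
      if (y : ℕ) = i then k - 1 else if k ≤ (y : ℕ) + 1 ∧ (y : ℕ) < i then (y : ℕ) + 1 else y := by
  rw [cyc_inv_eq_cycleIcc hi hk1 hk]
  by_cases hlo : (y : ℕ) + 1 < k
  · rw [Fin.cycleIcc_of_lt (by simp [Fin.lt_def]; omega)]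
    split_ifs <;> omega
  by_cases hhi : i < (y : ℕ)
  · rw [Fin.cycleIcc_of_gt (by simp [Fin.lt_def]; omega)]
    split_ifs <;> omega
  by_cases hyi : (y : ℕ) = i
  · rw [show y = ⟨i, by omega⟩ from Fin.ext hyi,
      Fin.cycleIcc_of_last (by simp [Fin.le_def]; omega)]
    simp
  · rw [Fin.cycleIcc_of_ge_of_lt (by simp [Fin.le_def]; omega) (by simp [Fin.lt_def]; omega),
      Fin.val_add_one_of_lt' (by omega)]
    split_ifs <;> omega

section cycProd

variable {r : ℕ} {k : ℕ → ℕ} {p q : ℕ}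

lemma cycProd_of_lt (h : q < p) : cycProd r k p q = 1 := by
  rw [cycProd, show q + 1 - p = 0 by omega]
  rfl

lemma cycProd_eq_cyc_mul (h : p ≤ q) :
    cycProd r k p q = cyc r p (k p) * cycProd r k (p + 1) q := by
  rw [cycProd, cycProd, show q + 1 - p = (q - p) + 1 by omega,
    show q + 1 - (p + 1) = q - p by omega, List.range'_succ, List.map_cons, List.prod_cons]

lemma cycProd_inv_apply_eq_self (hq : q ≤ r) (hk : ∀ i, p ≤ i → i ≤ q → 1 ≤ k i ∧ k i ≤ i + 1)
    {y : Fin (r + 1)} (hy : ∀ i, p ≤ i → i ≤ q → (y : ℕ) + 1 < k i ∨ i < y) :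
    (cycProd r k p q)⁻¹ y = y := by
  suffices cycProd r k p q ∈ MulAction.stabilizer (Perm (Fin (r + 1))) y from
    MulAction.mem_stabilizer_iff.mp (inv_mem this : (cycProd r k p q)⁻¹ ∈ _)
  rw [cycProd]
  refine Subgroup.list_prod_mem _ ?_
  simp only [List.mem_map, List.mem_range', one_mul]
  rintro _ ⟨i, ⟨j, hj, rfl⟩, rfl⟩
  rw [← inv_mem_iff, MulAction.mem_stabilizer_iff, Perm.smul_def]
  have := hy (p + j) (by omega) (by omega)
  have := hk (p + j) (by omega) (by omega)
  apply Fin.ext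
  rw [cyc_inv_apply_val (by omega) (by omega) (by omega)]
  split_ifs <;> omega

lemma cycProd_inv_apply_val (hq : q ≤ r) (hk : ∀ i, p ≤ i → i ≤ q → 1 ≤ k i ∧ k i ≤ i + 1)
    (hmono : StrictMonoOn k (Set.Icc p q)) {y : Fin (r + 1)} (hpy : p ≤ y) (hyq : (y : ℕ) ≤ q) :
    (((cycProd r k p q)⁻¹ y : Fin (r + 1)) : ℕ) = k y - 1 := by
  induction hpy using Nat.decreasingInduction with
  | self =>
    obtain ⟨hky1, hky⟩ := hk y le_rfl hyq
    have hσ : (((cyc r y (k y))⁻¹ y : Fin (r + 1)) : ℕ) = k y - 1 := by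
      rw [cyc_inv_apply_val (by omega) hky1 hky, if_pos rfl]
    rw [cycProd_eq_cyc_mul hyq, mul_inv_rev, Perm.mul_apply,
      cycProd_inv_apply_eq_self hq (fun i hi hiq => hk i (by omega) hiq), hσ]
    intro i hi hiq
    have := hmono ⟨le_rfl, hyq⟩ ⟨by omega, hiq⟩ (by omega : (y : ℕ) < i)
    omega
  | of_succ p hp ih =>
    obtain ⟨hkp1, hkp⟩ := hk p le_rfl (by omega)
    have hσ : (cyc r p (k p))⁻¹ y = y :=
      Fin.ext (by rw [cyc_inv_apply_val (by omega) hkp1 hkp]; split_ifs <;> omega)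
    rw [cycProd_eq_cyc_mul (by omega), mul_inv_rev, Perm.mul_apply, hσ]
    exact ih (fun i hi hiq => hk i (by omega) hiq)
      (hmono.mono (Set.Icc_subset_Icc_left (by omega)))

lemma cycProd_inv_strictMonoOn (hq : q ≤ r) (hk : ∀ i, p ≤ i → i ≤ q → 1 ≤ k i ∧ k i ≤ i + 1)
    (hpq : p ≤ q + 1) : StrictMonoOn ⇑(cycProd r k p q)⁻¹ {y | (y : ℕ) < p} := by
  induction hpq using Nat.decreasingInduction with
  | self =>
    rw [cycProd_of_lt (Nat.lt_succ_self q), inv_one, Perm.coe_one]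
    exact strictMono_id.strictMonoOn _
  | of_succ p hp ih =>
    obtain ⟨hkp1, hkp⟩ := hk p le_rfl (by omega)
    have hσ := cyc_inv_apply_val (by omega : p ≤ r) hkp1 hkp
    rw [cycProd_eq_cyc_mul (by omega), mul_inv_rev, Perm.coe_mul]
    refine (ih fun i hi hiq => hk i (by omega) hiq).comp ?_ ?_
    · intro y₁ hy₁ y₂ hy₂ hlt
      simp only [Set.mem_ofPred_eq, Fin.lt_def] at hy₁ hy₂ hlt ⊢
      rw [hσ, hσ]
      split_ifs <;> omega
    · intro y hy
      simp only [Set.mem_ofPred_eq] at hy ⊢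
      rw [hσ]
      split_ifs <;> omega

end cycProd

lemma psum_zero (c : ℕ → ℕ) : psum c 0 = 0 := by simp [psum]

lemma psum_succ (c : ℕ → ℕ) (j : ℕ) : psum c (j + 1) = psum c j + c (j + 1) :=
  sum_Icc_succ_top (by omega) c

lemma psum_mono (c : ℕ → ℕ) : Monotone (psum c) :=
  fun _ _ h => sum_le_sum_of_subset (Icc_subset_Icc le_rfl h)

lemma tailProd_one (r : ℕ) (c k : ℕ → ℕ) : tailProd r 1 c k 2 = 1 := rfl

lemma tailProd_succ (r : ℕ) (c k : ℕ → ℕ) {l : ℕ} (hl : 1 ≤ l) :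
    tailProd r (l + 1) c k 2 =
      tailProd r l c k 2 * cycProd r k (psum c l) (psum c (l + 1) - 1) := by
  rw [tailProd, tailProd, show l + 1 + 1 - 2 = (l + 1 - 2) + 1 by omega, List.range'_concat,
    List.map_append, List.prod_append, List.map_singleton, List.prod_singleton,
    show 2 + 1 * (l + 1 - 2) = l + 1 by omega, Nat.add_sub_cancel]

lemma tailProd_inv_apply_of_psum_le {r a : ℕ} {c k : ℕ → ℕ}
    (hc : ∀ j, 1 ≤ j → j ≤ a → 1 ≤ c j) (hcsum : psum c a = r + 1)
    (hka : ∀ i, psum c 1 ≤ i → i ≤ r → 1 ≤ k i ∧ k i ≤ i + 1)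
    {l : ℕ} (hl : 1 ≤ l) (hla : l ≤ a) {y : Fin (r + 1)} (hy : psum c l ≤ y) :
    (tailProd r l c k 2)⁻¹ y = y := by
  induction l, hl using Nat.le_induction with
  | base => rw [tailProd_one, inv_one, Perm.one_apply]
  | succ l hl ih =>
    have := psum_succ c l
    have := hc (l + 1) (by omega) hla
    have := psum_mono c hl
    have := psum_mono c hla
    rw [tailProd_succ r c k hl, mul_inv_rev, Perm.mul_apply, ih (by omega) (by omega),
      cycProd_inv_apply_eq_self (by omega) (fun i hi hiq => hka i (by omega) (by omega))]
    intro i hi hiq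
    omega

lemma tailProd_inv_lt_of_forall_psum {r a : ℕ} {c k : ℕ → ℕ}
    (hc : ∀ j, 1 ≤ j → j ≤ a → 1 ≤ c j) (hcsum : psum c a = r + 1)
    (hka : ∀ i, psum c 1 ≤ i → i ≤ r → 1 ≤ k i ∧ k i ≤ i + 1)
    (hkb : ∀ j, 2 ≤ j → j ≤ a → ∀ i, psum c (j - 1) ≤ i → i + 1 ≤ psum c j - 1 →
      k i < k (i + 1))
    {l : ℕ} (hl : 1 ≤ l) (hla : l ≤ a) {y₁ y₂ : Fin (r + 1)} (hlt : y₁ < y₂)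
    (hy₂ : (y₂ : ℕ) < psum c l) (hblock : ∀ j, (y₁ : ℕ) < psum c j → (y₂ : ℕ) < psum c j) :
    (tailProd r l c k 2)⁻¹ y₁ < (tailProd r l c k 2)⁻¹ y₂ := by
  induction l, hl using Nat.le_induction with
  | base => simpa [tailProd_one] using hlt
  | succ l hl ih =>
    set p := psum c l
    set q := psum c (l + 1) - 1
    have := psum_succ c l
    have := hc (l + 1) (by omega) hla
    have := psum_mono c hl
    have := psum_mono c hla
    have hk : ∀ i, p ≤ i → i ≤ q → 1 ≤ k i ∧ k i ≤ i + 1 :=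
      fun i hi hiq => hka i (by omega) (by omega)
    have hmono : StrictMonoOn k (Set.Icc p q) :=
      strictMonoOn_of_lt_add_one Set.ordConnected_Icc fun i _ hi hi' =>
        hkb (l + 1) (by omega) hla i (by simpa using hi.1) hi'.2
    rw [tailProd_succ r c k hl, mul_inv_rev, Perm.mul_apply, Perm.mul_apply]
    by_cases hy₂p : (y₂ : ℕ) < p
    · have hmaps : Set.MapsTo ⇑(tailProd r l c k 2)⁻¹ {y | (y : ℕ) < p} {y | (y : ℕ) < p} :=
        Equiv.Perm.mapsTo_of_forall_notMem_apply_eq fun y hy =>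
          tailProd_inv_apply_of_psum_le hc hcsum hka hl (by omega) (not_lt.mp hy)
      have hy₁p : (y₁ : ℕ) < p := lt_trans hlt hy₂p
      exact cycProd_inv_strictMonoOn (by omega) hk (by omega) (hmaps hy₁p) (hmaps hy₂p)
        (ih (by omega) hy₂p)
    · have hy₁p : p ≤ (y₁ : ℕ) := by
        by_contra h
        have := hblock l (by omega)
        omega
      rw [tailProd_inv_apply_of_psum_le hc hcsum hka hl (by omega) hy₁p,
        tailProd_inv_apply_of_psum_le hc hcsum hka hl (by omega) (not_lt.mp hy₂p), Fin.lt_def,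
        cycProd_inv_apply_val (by omega) hk hmono hy₁p (by omega),
        cycProd_inv_apply_val (by omega) hk hmono (by omega) (by omega)]
      have := hmono ⟨hy₁p, by omega⟩ ⟨by omega, by omega⟩ hlt
      have := hk y₁ hy₁p (by omega)
      omega

def blockIndex (c : ℕ → ℕ) (a y : ℕ) : ℕ :=
  ((Icc 1 (a - 1)).filter fun j => psum c j ≤ y).card

lemma blockIndex_mono (c : ℕ → ℕ) (a : ℕ) : Monotone (blockIndex c a) :=
  fun _ _ h => card_le_card (monotone_filter_right _ fun _ _ hj => hj.trans h)

lemma blockIndex_lt_of_lt_psum_le {c : ℕ → ℕ} {a j y₁ y₂ : ℕ} (hj : j ∈ Icc 1 (a - 1))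
    (h₁ : y₁ < psum c j) (h₂ : psum c j ≤ y₂) : blockIndex c a y₁ < blockIndex c a y₂ := by
  refine card_lt_card ⟨monotone_filter_right _ fun _ _ hj => by omega, fun hsub => ?_⟩
  have := (mem_filter.mp (hsub (mem_filter.mpr ⟨hj, h₂⟩))).2
  omega

lemma blockIndex_sub_one {c : ℕ → ℕ} {a i : ℕ} (hi : ∀ j, 1 ≤ j → j ≤ a - 1 → i ≠ psum c j) :
    blockIndex c a (i - 1) = blockIndex c a i := by
  refine congrArg card (filter_congr fun j hj => ?_)
  have := hi j (mem_Icc.mp hj).1 (mem_Icc.mp hj).2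
  omega

lemma lt_psum_of_blockIndex_eq {c : ℕ → ℕ} {a y₁ y₂ : ℕ}
    (heq : blockIndex c a y₁ = blockIndex c a y₂) (hy₂ : y₂ < psum c a) (j : ℕ)
    (hj : y₁ < psum c j) : y₂ < psum c j := by
  by_contra! h
  rcases Nat.eq_zero_or_pos j with rfl | hj₀
  · simp [psum_zero] at hj
  by_cases hja : j ≤ a - 1
  · exact (blockIndex_lt_of_lt_psum_le (mem_Icc.mpr ⟨hj₀, hja⟩) hj h).ne heq
  · have := psum_mono c (show a ≤ j by omega)
    omega

lemma blockIndex_apply_of_mem_WP {r a : ℕ} {c : ℕ → ℕ} {u : Perm (Fin (r + 1))}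
    (hu : u ∈ WP r a c) (x : Fin (r + 1)) : blockIndex c a (u x) = blockIndex c a x := by
  induction hu using Subgroup.closure_induction generalizing x with
  | mem g hg =>
    obtain ⟨i, hi₁, hir, hi, rfl⟩ := hg
    rw [sr_eq_swap hi₁ hir, swap_apply_def]
    have := blockIndex_sub_one hi
    split_ifs with h₁ h₂
    · subst h₁
      exact this.symm
    · subst h₂
      exact this
    · rfl
  | one => rfl
  | mul f g _ _ hf hg => rw [Perm.mul_apply, hf, hg]
  | inv f _ hf => simpa using (hf (f⁻¹ x)).symm

theorem stmt5_general (r a : ℕ) (ha : 1 ≤ a) (c k : ℕ → ℕ)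
    (hc : ∀ j, 1 ≤ j → j ≤ a → 1 ≤ c j) (hcsum : psum c a = r + 1)
    (hka : ∀ i, psum c 1 ≤ i → i ≤ r → 1 ≤ k i ∧ k i ≤ i + 1)
    (hkb : ∀ j, 2 ≤ j → j ≤ a → ∀ i, psum c (j - 1) ≤ i → i + 1 ≤ psum c j - 1 →
      k i < k (i + 1)) :
    ∀ u ∈ WP r a c, lenInv (tailProd r a c k 2) ≤ lenInv (u * tailProd r a c k 2) := by
  intro u hu
  refine lenInv_le_lenInv_mul (β := fun y : Fin (r + 1) => blockIndex c a y)
    ((blockIndex_mono c a).comp Fin.val_strictMono.monotone) (blockIndex_apply_of_mem_WP hu) ?_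
  intro y₁ y₂ heq hlt
  have hy₂ : (y₂ : ℕ) < psum c a := by rw [hcsum]; exact y₂.isLt
  exact tailProd_inv_lt_of_forall_psum hc hcsum hka hkb ha le_rfl hlt hy₂
    (lt_psum_of_blockIndex_eq heq hy₂)

/-- `w = Π_2 ⋯ Π_a` has minimal Coxeter length in its left coset
`W(P) w`. -/
theorem stmt5 (r a : ℕ) (hr : 1 ≤ r) (ha : 1 ≤ a) (c k : ℕ → ℕ)
    (hc : ∀ j, 1 ≤ j → j ≤ a → 1 ≤ c j) (hcsum : psum c a = r + 1)
    (hka : ∀ i, psum c 1 ≤ i → i ≤ r → 1 ≤ k i ∧ k i ≤ i + 1)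
    (hkb : ∀ j, 2 ≤ j → j ≤ a → ∀ i, psum c (j - 1) ≤ i → i + 1 ≤ psum c j - 1 →
      k i < k (i + 1)) :
    ∀ u ∈ WP r a c, lenInv (tailProd r a c k 2) ≤ lenInv (u * tailProd r a c k 2) :=
  stmt5_general r a ha c k hc hcsum hka hkb
end

section
/- Let 1 ≤ i ≤ j ≤ r, and for each i ≤ t ≤ j let k_t be an integer with 1 ≤ k_t ≤ t + 1; let π_{k_t} denote the cycle with ambient index t. If, for some 1 ≤ l ≤ r, π_{k_j}(α_l) is a positive root that is not a simple root, then π_{k_i} π_{k_{i+1}} ⋯ π_{k_j}(α_l) is a positive root. -/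
open Equiv Finset

/-!
On positions `0, …, r`, the cycle `π_κ` with ambient index `t` sends `κ - 1` to `t`, shifts
`κ, …, t` down by one and fixes everything else. Hence, if `π_{k_j}(α_l)` is positive but not
simple, the two endpoints of `α_l` are sent to positions `p < j ≤ q`. The remaining factors
`π_{k_i} ⋯ π_{k_{j-1}}` only involve `s_1, …, s_{j-1}`, so they fix `q` and keep `p` below `j`.
-/

lemma sr_apply_val {r m : ℕ} (hm : 1 ≤ m) (hmr : m ≤ r) (v : Fin (r + 1)) :
    (sr r m v : ℕ) = if (v : ℕ) + 1 = m then m else if (v : ℕ) = m then m - 1 else v := by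
  rw [sr, dif_pos ⟨hm, hmr⟩, swap_apply_def, apply_ite Fin.val, apply_ite Fin.val]
  simp only [Fin.ext_iff]
  split_ifs <;> omega

lemma cyc_of_lt {r t κ : ℕ} (h : t < κ) : cyc r t κ = 1 := by
  simp [cyc, Nat.sub_eq_zero_of_le (Nat.succ_le_of_lt h)]

lemma cyc_eq_cyc_succ_mul_sr {r t κ : ℕ} (h : κ ≤ t) :
    cyc r t κ = cyc r t (κ + 1) * sr r κ := by
  rw [cyc, cyc, show t + 1 - κ = (t - κ) + 1 by omega, show t + 1 - (κ + 1) = t - κ by omega,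
    List.range_succ, List.map_append, List.prod_append]
  simp [Nat.sub_sub_self h]

lemma cyc_apply_val {r t κ : ℕ} (ht : t ≤ r) (hκ : 1 ≤ κ) (v : Fin (r + 1)) :
    (cyc r t κ v : ℕ) =
      if (v : ℕ) + 1 = κ ∧ κ ≤ t then t
      else if κ ≤ (v : ℕ) ∧ (v : ℕ) ≤ t then (v : ℕ) - 1 else v := by
  induction hn : t + 1 - κ generalizing κ v with
  | zero =>
    rw [cyc_of_lt (by omega), Perm.one_apply]
    split_ifs <;> omega
  | succ n ih =>
    rw [cyc_eq_cyc_succ_mul_sr (by omega), Perm.mul_apply, ih (by omega) _ (by omega),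
      sr_apply_val hκ (by omega)]
    split_ifs <;> omega

lemma cyc_apply_lt_le_of_posRoot_of_not_simpleRoot {r t κ l : ℕ} (ht : t ≤ r) (hκ : 1 ≤ κ)
    (hpos : posRoot r (cyc r t κ) l) (hns : ¬ simpleRoot r (cyc r t κ) l) :
    (cyc r t κ (finOf r (l - 1)) : ℕ) < t ∧ t ≤ cyc r t κ (finOf r l) := by
  simp only [posRoot, simpleRoot, cyc_apply_val ht hκ, finOf] at hpos hns ⊢
  split_ifs at * <;> omega

lemma Equiv.Perm.apply_eq_of_mem_fixingSubgroup {α : Type*} {s : Set α} {g : Perm α}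
    (hg : g ∈ fixingSubgroup (Perm α) s) {x : α} (hx : x ∈ s) : g x = x :=
  (mem_fixingSubgroup_iff _).1 hg x hx

lemma Equiv.Perm.apply_notMem_of_mem_fixingSubgroup {α : Type*} {s : Set α} {g : Perm α}
    (hg : g ∈ fixingSubgroup (Perm α) s) {x : α} (hx : x ∉ s) : g x ∉ s := fun hgx =>
  hx (g.injective (g.apply_eq_of_mem_fixingSubgroup hg hgx) ▸ hgx)

section FixingLargePositions

variable {r j : ℕ}

lemma sr_mem_fixingSubgroup {m : ℕ} (hm : m ≤ j) :
    sr r m ∈ fixingSubgroup (Perm (Fin (r + 1))) {v : Fin (r + 1) | j < (v : ℕ)} := by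
  refine (mem_fixingSubgroup_iff _).2 fun v (hv : j < (v : ℕ)) => ?_
  rw [Perm.smul_def, sr]
  split_ifs
  · exact swap_apply_of_ne_of_ne (by simp [Fin.ext_iff]; omega) (by simp [Fin.ext_iff]; omega)
  · rfl

lemma cyc_mem_fixingSubgroup {t κ : ℕ} (ht : t ≤ j) :
    cyc r t κ ∈ fixingSubgroup (Perm (Fin (r + 1))) {v : Fin (r + 1) | j < (v : ℕ)} :=
  list_prod_mem fun _ hg => by
    obtain ⟨s, -, rfl⟩ := List.mem_map.1 hg
    exact sr_mem_fixingSubgroup (by omega)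

lemma cycProd_mem_fixingSubgroup (k : ℕ → ℕ) (i : ℕ) :
    cycProd r k i j ∈ fixingSubgroup (Perm (Fin (r + 1))) {v : Fin (r + 1) | j < (v : ℕ)} :=
  list_prod_mem fun _ hg => by
    obtain ⟨t, ht, rfl⟩ := List.mem_map.1 hg
    exact cyc_mem_fixingSubgroup (by have := List.mem_range'_1.1 ht; omega)

end FixingLargePositions

lemma cycProd_succ (r : ℕ) (k : ℕ → ℕ) {i j : ℕ} (hij : i ≤ j + 1) :
    cycProd r k i (j + 1) = cycProd r k i j * cyc r (j + 1) (k (j + 1)) := by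
  rw [cycProd, cycProd, show j + 1 + 1 - i = (j + 1 - i) + 1 by omega, List.range'_concat,
    List.map_append, List.prod_append, show i + 1 * (j + 1 - i) = j + 1 by omega]
  simp

theorem stmt10_general (r i j l : ℕ) (hij : i ≤ j) (hjr : j ≤ r)
    (k : ℕ → ℕ)
    (hk : ∀ t, i ≤ t → t ≤ j → 1 ≤ k t ∧ k t ≤ t + 1)
    (hpos : posRoot r (cyc r j (k j)) l)
    (hns : ¬ simpleRoot r (cyc r j (k j)) l) :
    posRoot r (cycProd r k i j) l := by
  obtain ⟨hlow, hhigh⟩ :=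
    cyc_apply_lt_le_of_posRoot_of_not_simpleRoot hjr (hk j hij le_rfl).1 hpos hns
  obtain ⟨j, rfl⟩ : ∃ j', j = j' + 1 := ⟨j - 1, by omega⟩
  rw [posRoot, cycProd_succ r k hij, Perm.mul_apply, Perm.mul_apply]
  set π := cyc r (j + 1) (k (j + 1))
  have hfix := cycProd_mem_fixingSubgroup (r := r) (j := j) k i
  have hbelow : (cycProd r k i j (π (finOf r (l - 1))) : ℕ) ≤ j :=
    not_lt.1 (Perm.apply_notMem_of_mem_fixingSubgroup hfix
      (not_lt.2 (show (π (finOf r (l - 1)) : ℕ) ≤ j by omega)))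
  have habove : cycProd r k i j (π (finOf r l)) = π (finOf r l) :=
    Perm.apply_eq_of_mem_fixingSubgroup hfix (show j < (π (finOf r l) : ℕ) by omega)
  omega

/-- if `π_{k_j}(α_l)` is a positive root that is not simple, then
`π_{k_i} π_{k_{i+1}} ⋯ π_{k_j}(α_l)` is a positive root. -/
theorem stmt10 (r i j l : ℕ) (hi : 1 ≤ i) (hij : i ≤ j) (hjr : j ≤ r)
    (hl1 : 1 ≤ l) (hlr : l ≤ r) (k : ℕ → ℕ)
    (hk : ∀ t, i ≤ t → t ≤ j → 1 ≤ k t ∧ k t ≤ t + 1)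
    (hpos : posRoot r (cyc r j (k j)) l)
    (hns : ¬ simpleRoot r (cyc r j (k j)) l) :
    posRoot r (cycProd r k i j) l :=
  stmt10_general r i j l hij hjr k hk hpos hns
end
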